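/- For every finite terminated digraph G=(V,E,T), the infinite digraph G^∞ is in IO(2,2): its vertex set partitions into two parts, one inducing a subgraph with a quasi-sink and the other a subgraph with a quasi-kernel. -/

import Mathlib

/-- There is a directed path of length at most `n` from `x` to `y`. -/
def PathLe {V : Type*} (E : V → V → Prop) (n : ℕ) (x y : V) : Prop :=
  ∃ k ≤ n, ∃ f : ℕ → V, f 0 = x ∧ f k = y ∧ ∀ i < k, E (f i) (f (i + 1))

/-- A directed path of length at most `n` from `x` to `y` all of whose vertices lie in `W`. -/
def PathLeIn {V : Type*} (E : V → V → Prop) (W : Set V) (n : ℕ) (x y : V) : Prop :=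
  ∃ k ≤ n, ∃ f : ℕ → V, f 0 = x ∧ f k = y ∧ (∀ i ≤ k, f i ∈ W) ∧ ∀ i < k, E (f i) (f (i + 1))

/-- `A` spans no edges of `E` (in either direction). -/
def Indep {V : Type*} (E : V → V → Prop) (A : Set V) : Prop :=
  ∀ a ∈ A, ∀ b ∈ A, ¬ E a b

/-- The induced subgraph on `W` is in the class `O_n`: some independent set `A ⊆ W`
reaches every vertex of `W` by a directed path of length at most `n` inside `W`. -/
def OutClass {V : Type*} (E : V → V → Prop) (n : ℕ) (W : Set V) : Prop :=
  ∃ A ⊆ W, Indep E A ∧ ∀ v ∈ W, ∃ a ∈ A, PathLeIn E W n a v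

/-- The induced subgraph on `W` is in the class `I_n`: some independent set `A ⊆ W`
is reached from every vertex of `W` by a directed path of length at most `n` inside `W`. -/
def InClass {V : Type*} (E : V → V → Prop) (n : ℕ) (W : Set V) : Prop :=
  ∃ A ⊆ W, Indep E A ∧ ∀ v ∈ W, ∃ a ∈ A, PathLeIn E W n v a

/-- The induced subgraph on `W` is in `IO(m, ℓ)`. -/
def IOClass {V : Type*} (E : V → V → Prop) (m ℓ : ℕ) (W : Set V) : Prop :=
  ∃ V₁ V₂ : Set V, V₁ ∪ V₂ = W ∧ Disjoint V₁ V₂ ∧ InClass E m V₁ ∧ OutClass E ℓ V₂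

/-- `E` is a tournament: no loops and exactly one direction between distinct vertices. -/
def IsTournament {V : Type*} (E : V → V → Prop) : Prop :=
  (∀ x, ¬ E x x) ∧ ∀ x y, x ≠ y → (E x y ↔ ¬ E y x)

/-- A vertex of `G^∞`: a finite sequence of nonterminal vertices followed by one terminal vertex. -/
def IsGVtx {V : Type*} (T : Set V) (x : List V) : Prop :=
  ∃ l t, x = l ++ [t] ∧ (∀ v ∈ l, v ∉ T) ∧ t ∈ T

/-- The edge relation of `G^∞`: `(x, y)` is an edge iff `(x(Δ), y(Δ)) ∈ E` where `Δ`
is the first coordinate where `x` and `y` differ. -/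
def GEdge {V : Type*} (E : V → V → Prop) (T : Set V)
    (x y : {x : List V // IsGVtx T x}) : Prop :=
  ∃ i a b, (x : List V).take i = (y : List V).take i ∧
    (x : List V)[i]? = some a ∧ (y : List V)[i]? = some b ∧ a ≠ b ∧ E a b

/-!
By Chvátal–Lovász, every finite digraph has a quasi-sink: an independent set reached from every
other vertex by a path of length at most 2. A vertex `x` of `G^∞` is classified by its stop
letter, the first letter of `x` outside a fixed set `R` of nonterminal letters. Adjacency in `G^∞`
is decided at the first differing letters, so short paths of `G` lift to `G^∞` behind any fixed
prefix `w ∈ R*`, with the lifted letters as stop letters. The seeds of the first side are the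
vertices `w q` and `w q t₀` with `w ∈ R*` and `q ∈ H`, those of the second side the same with
`q ∈ S`; every other vertex joins the side chosen by whether its stop letter lies in `σ`. Two
seeds of one side can only first differ at letters of `R ∪ H`, as past their stop letters both
continue with `t₀`; hence the seeds are independent.

It remains to choose `R, H, S, σ` in the finite digraph. If some quasi-sink `K` of `G` has a
member that is terminal or routes (points to a vertex outside `K` that points back into `K`), `K`
serves as `R ∪ H` for a single side containing everything. Otherwise `K` is used for the first
side and a quasi-source `S` of the vertices that `K` does not point to for the second; every
member of `S` points into `K`, since otherwise it could be added to `K` and would route.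
-/

open scoped Classical

section Paths

variable {α : Type*} {F : α → α → Prop} {W : Set α} {m n : ℕ} {x y z : α}

theorem PathLeIn.refl (hx : x ∈ W) : PathLeIn F W n x x :=
  ⟨0, Nat.zero_le n, fun _ => x, rfl, rfl, fun _ _ => hx, fun _ h => absurd h (Nat.not_lt_zero _)⟩

theorem PathLeIn.cons (hx : x ∈ W) (hxy : F x y) (h : PathLeIn F W n y z) :
    PathLeIn F W (n + 1) x z := by
  obtain ⟨k, hk, f, hf0, hfk, hfW, hfF⟩ := h
  refine ⟨k + 1, by omega, fun | 0 => x | i + 1 => f i, rfl, hfk, ?_, ?_⟩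
  · rintro (_ | i) hi
    exacts [hx, hfW i (by omega)]
  · rintro (_ | i) hi
    exacts [show F x (f 0) from hf0 ▸ hxy, hfF i (by omega)]

theorem PathLeIn.mono (h : PathLeIn F W m x y) (hmn : m ≤ n) : PathLeIn F W n x y :=
  let ⟨k, hk, hf⟩ := h
  ⟨k, hk.trans hmn, hf⟩

theorem PathLeIn.flip (h : PathLeIn F W n x y) : PathLeIn (flip F) W n y x := by
  obtain ⟨k, hk, f, hf0, hfk, hfW, hfF⟩ := h
  refine ⟨k, hk, fun i => f (k - i), by simpa, by simpa, fun i _ => hfW _ (Nat.sub_le k i), ?_⟩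
  intro i hi
  show F (f (k - (i + 1))) (f (k - i))
  rw [show k - i = k - (i + 1) + 1 by omega]
  exact hfF _ (by omega)

theorem outClass_of_inClass_flip (h : InClass (flip F) n W) : OutClass F n W :=
  let ⟨A, hAW, hA, hreach⟩ := h
  ⟨A, hAW, fun a ha b hb => hA b hb a ha,
    fun v hv => let ⟨a, ha, hp⟩ := hreach v hv; ⟨a, ha, hp.flip⟩⟩

end Paths

namespace Ginf

variable {V : Type*}

section Finite

variable {E : V → V → Prop}

variable (E) in
def ReachesIn2 (M C : Set V) (v : V) : Prop :=
  ∃ c ∈ C, E v c ∨ ∃ u ∈ M, E v u ∧ E u c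

theorem ReachesIn2.mono {M M' C C' : Set V} {v : V} (h : ReachesIn2 E M C v)
    (hM : M ⊆ M') (hC : C ⊆ C') : ReachesIn2 E M' C' v := by
  obtain ⟨c, hc, h | ⟨u, hu, hvu, huc⟩⟩ := h
  · exact ⟨c, hC hc, .inl h⟩
  · exact ⟨c, hC hc, .inr ⟨u, hM hu, hvu, huc⟩⟩

variable (E) in
def IsQuasiSink (W K : Set V) : Prop :=
  K ⊆ W ∧ (∀ a ∈ K, ∀ b ∈ K, ¬E a b) ∧ ∀ v ∈ W \ K, ReachesIn2 E (W \ K) K v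

theorem exists_isQuasiSink [Finite V] (hE : ∀ a, ¬E a a) (W : Set V) :
    ∃ K, IsQuasiSink E W K := by
  induction h : W.ncard using Nat.strong_induction_on generalizing W with
  | _ n ih =>
  rcases W.eq_empty_or_nonempty with rfl | ⟨x, hx⟩
  · exact ⟨∅, by simp [IsQuasiSink]⟩
  -- Recurse on the vertices of `W` that neither are `x` nor point to `x`.
  set W' := {v ∈ W | v ≠ x ∧ ¬E v x}
  have hW' : W' ⊆ W := fun v hv => hv.1
  have hxW' : x ∉ W' := fun hx' => hx'.2.1 rfl
  have hlt : W'.ncard < n :=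
    h ▸ Set.ncard_lt_ncard ((Set.ssubset_iff_of_subset hW').2 ⟨x, hx, hxW'⟩)
  obtain ⟨K', hK'W', hK'ind, hK'reach⟩ := ih _ hlt W' rfl
  have hxK' : x ∉ K' := fun h => hxW' (hK'W' h)
  have to_x : ∀ v ∈ W, v ∉ W' → v ≠ x → E v x := fun v hv hvW' hvx => by
    by_contra hvx'
    exact hvW' ⟨hv, hvx, hvx'⟩
  by_cases hxq : ∃ q ∈ K', E x q
  · obtain ⟨q, hq, hxq⟩ := hxq
    refine ⟨K', hK'W'.trans hW', hK'ind, fun v ⟨hv, hvK'⟩ => ?_⟩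
    by_cases hvW' : v ∈ W'
    · exact (hK'reach v ⟨hvW', hvK'⟩).mono (Set.sdiff_subset_sdiff_left hW') le_rfl
    by_cases hvx : v = x
    · exact ⟨q, hq, .inl (hvx ▸ hxq)⟩
    · exact ⟨q, hq, .inr ⟨x, ⟨hx, hxK'⟩, to_x v hv hvW' hvx, hxq⟩⟩
  · push Not at hxq
    refine ⟨insert x K', Set.insert_subset hx (hK'W'.trans hW'), ?_, ?_⟩
    · rintro a (rfl | ha) b (rfl | hb)
      · exact hE _
      · exact hxq b hb
      · exact (hK'W' ha).2.2
      · exact hK'ind a ha b hb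
    · rintro v ⟨hv, hvK⟩
      have hvx : v ≠ x := fun h => hvK (.inl h)
      by_cases hvW' : v ∈ W'
      · refine (hK'reach v ⟨hvW', fun h => hvK (.inr h)⟩).mono ?_ (Set.subset_insert _ _)
        rintro u ⟨huW', huK'⟩
        exact ⟨hW' huW', by rintro (rfl | hu) <;> [exact hxW' huW'; exact huK' hu]⟩
      · exact ⟨x, .inl rfl, .inl (to_x v hv hvW' hvx)⟩

variable (E) in
def Routes (K : Set V) (q : V) : Prop :=
  ∃ u ∉ K, E q u ∧ ∃ c ∈ K, E u c

/-- The possible stop letters of the non-seed vertices of a side. -/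
def FreeLetters (T R H S σ : Set V) : Set V :=
  {v | v ∉ R ∧ v ∈ σ ∧ (v ∈ T → v ∉ H ∧ v ∉ S)}

variable (E) in
structure SideConfig (T R H S σ : Set V) : Prop where
  disjoint_terminal : Disjoint R T
  disjoint_seed : Disjoint R H
  indep : ∀ a ∈ H ∪ R, ∀ b ∈ H ∪ R, ¬E a b
  nonempty : (FreeLetters T R H S σ).Nonempty → H.Nonempty
  reaches : ∀ v ∈ FreeLetters T R H S σ, ReachesIn2 E (FreeLetters T R H S σ) (H ∪ R) v

variable (E) in
structure Config (T : Set V) where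
  (R H S σ : Set V)
  side_in : SideConfig E T R H S σ
  side_out : SideConfig (flip E) T R S H σᶜ
  disjoint : Disjoint H S

theorem nonempty_config_of_terminal_or_routes {T K : Set V} (hK : IsQuasiSink E .univ K)
    {q : V} (hq : q ∈ K) (hqT : q ∈ T ∨ Routes E K q) : Nonempty (Config E T) := by
  obtain ⟨-, hKind, hKreach⟩ := hK
  set H := {k ∈ K | k ∈ T ∨ Routes E K k}
  set R := K \ H
  have hHR : H ∪ R = K := Set.union_sdiff_cancel (Set.sep_subset _ _)
  have hRT : Disjoint R T := Set.disjoint_left.2 fun k hk hkT => hk.2 ⟨hk.1, .inl hkT⟩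
  refine ⟨⟨R, H, ∅, .univ,
    ⟨hRT, Set.disjoint_sdiff_left, hHR ▸ hKind, fun _ => ⟨q, hq, hqT⟩, ?_⟩,
    ⟨hRT, Set.disjoint_empty _, ?_, fun ⟨_, _, hv, _⟩ => (hv trivial).elim,
      fun _ ⟨_, hv, _⟩ => (hv trivial).elim⟩, Set.disjoint_empty _⟩⟩
  · have hfree : Set.univ \ K ⊆ FreeLetters T R H ∅ .univ :=
      fun u hu => ⟨fun h => hu.2 h.1, trivial, fun _ => ⟨fun h => hu.2 h.1, id⟩⟩
    rintro v ⟨hvR, -, hvT⟩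
    by_cases hvK : v ∈ K
    · have hvH : v ∈ H := by_contra fun h => hvR ⟨hvK, h⟩
      obtain ⟨u, huK, hvu, c, hc, huc⟩ : Routes E K v :=
        hvH.2.resolve_left fun h => (hvT h).1 hvH
      exact ⟨c, hHR.ge hc, .inr ⟨u, hfree ⟨trivial, huK⟩, hvu, huc⟩⟩
    · exact (hKreach v ⟨trivial, hvK⟩).mono hfree hHR.ge
  · rw [Set.empty_union]
    exact fun a ha b hb => hKind b hb.1 a ha.1

theorem isQuasiSink_insert_and_routes (hE : ∀ a, ¬E a a) {K : Set V}
    (hK : IsQuasiSink E .univ K) {l : V} (hlK : l ∉ K) (hKl : ∀ k ∈ K, ¬E k l)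
    (hlK' : ∀ k ∈ K, ¬E l k) :
    IsQuasiSink E .univ (insert l K) ∧ Routes E (insert l K) l := by
  obtain ⟨-, hKind, hKreach⟩ := hK
  have hmid : ∀ u ∉ K, ∀ c ∈ K, E u c → u ∉ insert l K := by
    rintro u huK c hc huc (rfl | hu)
    exacts [hlK' c hc huc, huK hu]
  refine ⟨⟨Set.subset_univ _, ?_, ?_⟩, ?_⟩
  · rintro a (rfl | ha) b (rfl | hb)
    exacts [hE _, hlK' b hb, hKl a ha, hKind a ha b hb]
  · rintro v ⟨-, hv⟩
    obtain ⟨c, hc, hvc | ⟨u, ⟨-, huK⟩, hvu, huc⟩⟩ := hKreach v ⟨trivial, fun h => hv (.inr h)⟩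
    · exact ⟨c, .inr hc, .inl hvc⟩
    · exact ⟨c, .inr hc, .inr ⟨u, ⟨trivial, hmid u huK c hc huc⟩, hvu, huc⟩⟩
  · obtain ⟨c, hc, hlc | ⟨u, ⟨-, huK⟩, hlu, huc⟩⟩ := hKreach l ⟨trivial, hlK⟩
    · exact absurd hlc (hlK' c hc)
    · exact ⟨u, hmid u huK c hc huc, hlu, c, .inr hc, huc⟩

theorem nonempty_config_of_isQuasiSink {T K S' : Set V} (hK : IsQuasiSink E .univ K)
    (hKT : Disjoint K T) (hS' : IsQuasiSink (flip E) {v | v ∉ K ∧ ∀ k ∈ K, ¬E k v} S')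
    (hS'ne : S'.Nonempty) (hS'K : ∀ l ∈ S', ∃ k ∈ K, E l k) : Nonempty (Config E T) := by
  obtain ⟨-, hKind, -⟩ := hK
  obtain ⟨hS'V', hS'ind, hS'reach⟩ := hS'
  set H := {k ∈ K | ∃ s ∈ S', E s k}
  set R := K \ H
  have hHR : H ∪ R = K := Set.union_sdiff_cancel (Set.sep_subset _ _)
  have hRT : Disjoint R T := hKT.mono_left fun k hk => hk.1
  have hHS' : Disjoint H S' := Set.disjoint_left.2 fun k hk hkS => (hS'V' hkS).1 hk.1
  have hRS' : Disjoint R S' := Set.disjoint_left.2 fun k hk hkS => (hS'V' hkS).1 hk.1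
  refine ⟨⟨R, H, S', S', ⟨hRT, Set.disjoint_sdiff_left, hHR ▸ hKind, ?_, ?_⟩,
    ⟨hRT, hRS', ?_, fun _ => hS'ne, ?_⟩, hHS'⟩⟩
  · intro _
    obtain ⟨l, hl⟩ := hS'ne
    obtain ⟨k, hk, hlk⟩ := hS'K l hl
    exact ⟨k, hk, l, hl, hlk⟩
  · rintro v ⟨-, hvS', -⟩
    obtain ⟨k, hk, hvk⟩ := hS'K v hvS'
    exact ⟨k, hHR.ge hk, .inl hvk⟩
  · rintro a (ha | ha) b (hb | hb)
    · exact hS'ind a ha b hb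
    · exact (hS'V' ha).2 b hb.1
    · exact fun hba => ha.2 ⟨ha.1, b, hb, hba⟩
    · exact hKind b hb.1 a ha.1
  · have hfree : ∀ u, u ∉ K → u ∉ S' → u ∈ FreeLetters T R S' H S'ᶜ :=
      fun u huK huS' => ⟨fun h => huK h.1, huS', fun _ => ⟨huS', fun h => huK h.1⟩⟩
    rintro v ⟨hvR, hvS', -⟩
    by_cases hvK : v ∈ K
    · obtain ⟨s, hs, hsv⟩ : ∃ s ∈ S', E s v :=
        by_contra fun h => hvR ⟨hvK, fun hH => h hH.2⟩
      exact ⟨s, .inl hs, .inl hsv⟩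
    by_cases hv : ∀ k ∈ K, ¬E k v
    · exact (hS'reach v ⟨⟨hvK, hv⟩, hvS'⟩).mono (fun u hu => hfree u hu.1.1 hu.2)
        Set.subset_union_left
    push Not at hv
    obtain ⟨k, hk, hkv⟩ := hv
    by_cases hkH : ∃ s ∈ S', E s k
    · obtain ⟨s, hs, hsk⟩ := hkH
      refine ⟨s, .inl hs, .inr ⟨k, ⟨fun h => h.2 ⟨hk, s, hs, hsk⟩, ?_, ?_⟩, hkv, hsk⟩⟩
      · exact fun h => (hS'V' h).1 hk
      · exact fun hkT => (Set.disjoint_left.1 hKT hk hkT).elim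
    · exact ⟨k, .inr ⟨hk, fun h => hkH h.2⟩, .inl hkv⟩

theorem nonempty_config [Finite V] (hE : ∀ a, ¬E a a) {T : Set V} (hT : T.Nonempty) :
    Nonempty (Config E T) := by
  by_cases hsome : ∃ K, IsQuasiSink E .univ K ∧ ∃ q ∈ K, q ∈ T ∨ Routes E K q
  · obtain ⟨K, hK, q, hq, h⟩ := hsome
    exact nonempty_config_of_terminal_or_routes hK hq h
  push Not at hsome
  obtain ⟨K, hK⟩ := exists_isQuasiSink hE .univ
  set V' := {v | v ∉ K ∧ ∀ k ∈ K, ¬E k v}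
  obtain ⟨S', hS'⟩ := exists_isQuasiSink (E := flip E) hE V'
  have hKT : Disjoint K T := Set.disjoint_left.2 fun k hk => (hsome K hK k hk).1
  -- An in-neighbour in `K` of such a `p` would route.
  have hV' : ∀ p ∉ K, ∀ c ∈ K, E p c → p ∈ V' := fun p hp c hc hpc =>
    ⟨hp, fun k hk hkp => (hsome K hK k hk).2 ⟨p, hp, hkp, c, hc, hpc⟩⟩
  have hV'ne : V'.Nonempty := by
    obtain ⟨t, ht⟩ := hT
    obtain ⟨c, hc, htc | ⟨u, ⟨-, hu⟩, -, huc⟩⟩ :=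
      hK.2.2 t ⟨trivial, Set.disjoint_right.1 hKT ht⟩
    exacts [⟨t, hV' t (Set.disjoint_right.1 hKT ht) c hc htc⟩, ⟨u, hV' u hu c hc huc⟩]
  have hS'ne : S'.Nonempty := by
    obtain ⟨v, hv⟩ := hV'ne
    by_cases hvS' : v ∈ S'
    · exact ⟨v, hvS'⟩
    · obtain ⟨c, hc, -⟩ := hS'.2.2 v ⟨hv, hvS'⟩
      exact ⟨c, hc⟩
  refine nonempty_config_of_isQuasiSink hK hKT hS' hS'ne fun l hl => by_contra fun h => ?_
  push Not at h
  obtain ⟨hlK, hKl⟩ := hS'.1 hl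
  obtain ⟨hJ, hlJ⟩ := isQuasiSink_insert_and_routes hE hK hlK hKl h
  exact (hsome _ hJ l (.inl rfl)).2 hlJ

end Finite

section Lift

variable {E : V → V → Prop} {T R H S σ : Set V} {t0 : V}

abbrev GVertex (T : Set V) := {x : List V // IsGVtx T x}

theorem gedge_iff {x y : GVertex T} :
    GEdge E T x y ↔ ∃ w a b r r', x.1 = w ++ a :: r ∧ y.1 = w ++ b :: r' ∧ a ≠ b ∧ E a b := by
  constructor
  · rintro ⟨i, a, b, hxy, hx, hy, hab, hE⟩
    obtain ⟨hix, rfl⟩ := List.getElem?_eq_some_iff.1 hx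
    obtain ⟨hiy, rfl⟩ := List.getElem?_eq_some_iff.1 hy
    refine ⟨x.1.take i, _, _, x.1.drop (i + 1), y.1.drop (i + 1), ?_, ?_, hab, hE⟩
    · rw [← List.drop_eq_getElem_cons hix, List.take_append_drop]
    · rw [hxy, ← List.drop_eq_getElem_cons hiy, List.take_append_drop]
  · rintro ⟨w, a, b, r, r', hx, hy, hab, hE⟩
    refine ⟨w.length, a, b, ?_, by simp [hx], by simp [hy], hab, hE⟩
    rw [hx, hy, List.take_left' rfl, List.take_left' rfl]

theorem gedge_of_append_cons (hE : ∀ a, ¬E a a) {x y : GVertex T} {w r r' : List V}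
    {a b : V} (hx : x.1 = w ++ a :: r) (hy : y.1 = w ++ b :: r') (hab : E a b) : GEdge E T x y :=
  gedge_iff.2 ⟨w, a, b, r, r', hx, hy, fun h => hE a (h ▸ hab), hab⟩

theorem gedge_ne_and : GEdge (fun a b => a ≠ b ∧ E a b) T = GEdge E T := by
  ext x y
  constructor
  · rintro ⟨i, a, b, hxy, hx, hy, hab, -, hE⟩
    exact ⟨i, a, b, hxy, hx, hy, hab, hE⟩
  · rintro ⟨i, a, b, hxy, hx, hy, hab, hE⟩
    exact ⟨i, a, b, hxy, hx, hy, hab, hab, hE⟩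

theorem gedge_flip : GEdge (flip E) T = flip (GEdge E T) := by
  ext x y
  constructor <;> rintro ⟨i, a, b, hxy, hx, hy, hab, hE⟩ <;>
    exact ⟨i, b, a, hxy.symm, hy, hx, hab.symm, hE⟩

theorem eq_nil_of_mem_terminal {w r : List V} {s : V} (hx : IsGVtx T (w ++ s :: r))
    (hs : s ∈ T) : r = [] := by
  obtain ⟨l, t, hl, hlT, -⟩ := hx
  obtain rfl | ⟨r', t', rfl⟩ := r.eq_nil_or_concat
  · rfl
  · have hl' : (w ++ s :: r') ++ [t'] = l ++ [t] := by simpa using hl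
    rw [← (List.append_inj' hl' rfl).1] at hlT
    exact absurd hs (hlT s (by simp))

def IsSeed (R H : Set V) (t0 : V) (x : List V) : Prop :=
  ∃ q ∈ H, x.dropWhile (· ∈ R) = [q] ∨ x.dropWhile (· ∈ R) = [q, t0]

def side (T R H S σ : Set V) (t0 : V) : Set (GVertex T) :=
  {x | IsSeed R H t0 x.1 ∨ ¬IsSeed R S t0 x.1 ∧ ∃ s ∈ (x.1.dropWhile (· ∈ R)).head?, s ∈ σ}

theorem exists_eq_append_cons (hRT : Disjoint R T) (x : GVertex T) :
    ∃ w s r, x.1 = w ++ s :: r ∧ (∀ v ∈ w, v ∈ R) ∧ s ∉ R := by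
  have hhead := List.head?_dropWhile_not (· ∈ R) x.1
  cases hd : x.1.dropWhile (· ∈ R) with
  | nil =>
    obtain ⟨l, t, hl, -, ht⟩ := x.2
    have htR : t ∈ R := by simpa using List.dropWhile_eq_nil_iff.1 hd t (by simp [hl])
    exact absurd ht (Set.disjoint_left.1 hRT htR)
  | cons s r =>
    refine ⟨x.1.takeWhile (· ∈ R), s, r, by rw [← hd, List.takeWhile_append_dropWhile],
      fun v hv => by simpa using List.mem_takeWhile_imp hv, ?_⟩
    simpa [hd] using hhead

theorem dropWhile_append_cons {w r : List V} {s : V} (hw : ∀ v ∈ w, v ∈ R) (hs : s ∉ R) :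
    (w ++ s :: r).dropWhile (· ∈ R) = s :: r := by
  simp [List.dropWhile_append_of_pos (p := (· ∈ R)) (by simpa using hw), hs]

theorem isSeed_append_cons_iff {w r : List V} {s : V} (hw : ∀ v ∈ w, v ∈ R) (hs : s ∉ R) :
    IsSeed R H t0 (w ++ s :: r) ↔ s ∈ H ∧ (r = [] ∨ r = [t0]) := by
  simp [IsSeed, dropWhile_append_cons hw hs, ← and_or_left, eq_comm (a := s)]

theorem mem_side_iff {x : GVertex T} {w r : List V} {s : V} (hx : x.1 = w ++ s :: r)
    (hw : ∀ v ∈ w, v ∈ R) (hs : s ∉ R) :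
    x ∈ side T R H S σ t0 ↔
      s ∈ H ∧ (r = [] ∨ r = [t0]) ∨ ¬(s ∈ S ∧ (r = [] ∨ r = [t0])) ∧ s ∈ σ := by
  simp [side, hx, isSeed_append_cons_iff hw hs, dropWhile_append_cons hw hs]

theorem mem_union_of_isSeed {w r : List V} {a : V} (hw : ∀ v ∈ w, v ∈ R)
    (h : IsSeed R H t0 (w ++ a :: r)) : a ∈ H ∪ R := by
  by_cases ha : a ∈ R
  · exact .inr ha
  · exact .inl ((isSeed_append_cons_iff hw ha).1 h).1

theorem eq_of_isSeed {w r : List V} {a : V} (hw : ¬∀ v ∈ w, v ∈ R)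
    (h : IsSeed R H t0 (w ++ a :: r)) : a = t0 := by
  have hd : w.dropWhile (· ∈ R) ≠ [] := fun hd => hw fun v hv => by
    simpa using List.dropWhile_eq_nil_iff.1 hd v hv
  unfold IsSeed at h
  rw [List.dropWhile_append, if_neg (by simpa using hd)] at h
  generalize w.dropWhile (· ∈ R) = d at h hd
  obtain ⟨q, -, h | h⟩ := h
  · have hlen := congrArg List.length h
    simp only [List.length_append, List.length_cons, List.length_nil] at hlen
    exact absurd (List.length_pos_of_ne_nil hd) (by omega)
  · obtain _ | ⟨q', d⟩ := d
    · exact absurd rfl hd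
    · simp only [List.cons_append, List.cons.injEq, List.append_eq_singleton_iff] at h
      simp_all

theorem indep_isSeed (hind : ∀ a ∈ H ∪ R, ∀ b ∈ H ∪ R, ¬E a b) :
    Indep (GEdge E T) {x : GVertex T | IsSeed R H t0 x.1} := by
  intro x hx y hy hxy
  obtain ⟨w, a, b, r, r', hxw, hyw, hab, hE⟩ := gedge_iff.1 hxy
  rw [Set.mem_ofPred_eq, hxw] at hx
  rw [Set.mem_ofPred_eq, hyw] at hy
  by_cases hw : ∀ v ∈ w, v ∈ R
  · exact hind a (mem_union_of_isSeed hw hx) b (mem_union_of_isSeed hw hy) hE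
  · exact hab ((eq_of_isSeed hw hx).trans (eq_of_isSeed hw hy).symm)

theorem compl_side (hRT : Disjoint R T) (hHS : Disjoint H S) :
    (side T R H S σ t0)ᶜ = side T R S H σᶜ t0 := by
  ext x
  obtain ⟨w, s, r, hxw, hw, hs⟩ := exists_eq_append_cons hRT x
  simp only [Set.mem_compl_iff, mem_side_iff hxw hw hs]
  have : s ∈ H → s ∉ S := fun h => Set.disjoint_left.1 hHS h
  tauto

section Extend

variable (hRT : Disjoint R T) (ht0 : t0 ∈ T) {w : List V} (hw : ∀ v ∈ w, v ∈ R)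
include hRT ht0 hw

theorem exists_isSeed_append_cons_of_mem (hRH : Disjoint R H) {q : V} (hq : q ∈ H) :
    ∃ y : GVertex T, IsSeed R H t0 y.1 ∧ ∃ r, y.1 = w ++ q :: r := by
  have hwT : ∀ v ∈ w, v ∉ T := fun v hv => Set.disjoint_left.1 hRT (hw v hv)
  have hqR : q ∉ R := Set.disjoint_right.1 hRH hq
  by_cases hqT : q ∈ T
  · exact ⟨⟨w ++ [q], w, q, rfl, hwT, hqT⟩, (isSeed_append_cons_iff hw hqR).2 ⟨hq, .inl rfl⟩,
      [], rfl⟩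
  · refine ⟨⟨w ++ [q, t0], w ++ [q], t0, by simp, ?_, ht0⟩,
      (isSeed_append_cons_iff hw hqR).2 ⟨hq, .inr rfl⟩, [t0], rfl⟩
    simpa [or_imp, forall_and, hqT] using hwT

theorem exists_isSeed_append_cons (hRH : Disjoint R H) (hH : H.Nonempty) {c : V}
    (hc : c ∈ H ∪ R) : ∃ y : GVertex T, IsSeed R H t0 y.1 ∧ ∃ r, y.1 = w ++ c :: r := by
  rcases hc with hc | hc
  · exact exists_isSeed_append_cons_of_mem hRT ht0 hw hRH hc
  · obtain ⟨q, hq⟩ := hH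
    have hwc : ∀ v ∈ w ++ [c], v ∈ R := by simpa [or_imp, forall_and, hc] using hw
    obtain ⟨y, hy, r, hyr⟩ := exists_isSeed_append_cons_of_mem hRT ht0 hwc hRH hq
    exact ⟨y, hy, q :: r, by simp [hyr]⟩

theorem exists_mem_side_append_cons {u : V} (hu : u ∈ FreeLetters T R H S σ) :
    ∃ m ∈ side T R H S σ t0, ∃ r, m.1 = w ++ u :: r := by
  have hwT : ∀ v ∈ w, v ∉ T := fun v hv => Set.disjoint_left.1 hRT (hw v hv)
  obtain ⟨huR, huσ, huT⟩ := hu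
  by_cases huT' : u ∈ T
  · exact ⟨⟨w ++ [u], w, u, rfl, hwT, huT'⟩,
      (mem_side_iff rfl hw huR).2 (.inr ⟨fun h => (huT huT').2 h.1, huσ⟩), [], rfl⟩
  · -- The tail `[u, t0]` keeps this vertex from being a seed of either side.
    refine ⟨⟨w ++ [u, u, t0], w ++ [u, u], t0, by simp, ?_, ht0⟩,
      (mem_side_iff rfl hw huR).2 (.inr ⟨by simp, huσ⟩), [u, t0], rfl⟩
    simpa [or_imp, forall_and, huT'] using hwT

end Extend

theorem inClass_side (hE : ∀ a, ¬E a a) (ht0 : t0 ∈ T) (hc : SideConfig E T R H S σ) :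
    InClass (GEdge E T) 2 (side T R H S σ t0) := by
  refine ⟨{x | IsSeed R H t0 x.1}, fun x hx => .inl hx, indep_isSeed hc.indep, fun x hx => ?_⟩
  by_cases hxH : IsSeed R H t0 x.1
  · exact ⟨x, hxH, .refl hx⟩
  obtain ⟨w, s, r, hxw, hw, hs⟩ := exists_eq_append_cons hc.disjoint_terminal x
  have hsF : s ∈ FreeLetters T R H S σ := by
    rw [mem_side_iff hxw hw hs] at hx
    rw [hxw, isSeed_append_cons_iff hw hs] at hxH
    replace hx := hx.resolve_left hxH
    refine ⟨hs, hx.2, fun hsT => ?_⟩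
    have hr := eq_nil_of_mem_terminal (hxw ▸ x.2) hsT
    exact ⟨fun h => hxH ⟨h, .inl hr⟩, fun h => hx.1 ⟨h, .inl hr⟩⟩
  obtain ⟨c, hcHR, hsc⟩ := hc.reaches s hsF
  obtain ⟨y, hy, ry, hyw⟩ := exists_isSeed_append_cons hc.disjoint_terminal ht0 hw
    hc.disjoint_seed (hc.nonempty ⟨s, hsF⟩) hcHR
  rcases hsc with hsc | ⟨u, hu, hsu, huc⟩
  · exact ⟨y, hy, ((PathLeIn.refl (n := 0) (.inl hy)).cons hx
      (gedge_of_append_cons hE hxw hyw hsc)).mono one_le_two⟩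
  · obtain ⟨m, hm, rm, hmw⟩ := exists_mem_side_append_cons hc.disjoint_terminal ht0 hw hu
    exact ⟨y, hy, ((PathLeIn.refl (.inl hy)).cons hm (gedge_of_append_cons hE hmw hyw huc)).cons
      hx (gedge_of_append_cons hE hxw hmw hsu)⟩

end Lift

end Ginf

open Ginf

/-- For every finite terminated digraph `G = (V,E,T)`, the digraph `G^∞` is in `IO(2,2)`. -/
theorem ginf_io22 {V : Type*} [Fintype V] (E : V → V → Prop)
    (T : Set V) (hT : T.Nonempty) :
    IOClass (GEdge E T) 2 2 (Set.univ : Set {x : List V // IsGVtx T x}) := by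
  obtain ⟨t0, ht0⟩ := hT
  set E' : V → V → Prop := fun a b => a ≠ b ∧ E a b
  have hE' : ∀ a, ¬E' a a := fun a h => h.1 rfl
  obtain ⟨C⟩ := nonempty_config hE' ⟨t0, ht0⟩
  rw [← gedge_ne_and]
  refine ⟨side T C.R C.H C.S C.σ t0, (side T C.R C.H C.S C.σ t0)ᶜ, Set.union_compl_self _,
    disjoint_compl_right, inClass_side hE' ht0 C.side_in, ?_⟩
  rw [compl_side C.side_in.disjoint_terminal C.disjoint]
  refine outClass_of_inClass_flip ?_
  rw [← gedge_flip]
  exact inClass_side hE' ht0 C.side_out
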